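/- Let (W,S) be a Coxeter system, J a subset of the index set of the simple reflections, W_J the subgroup generated by {s_j : j ∈ J}, and W^J = {w ∈ W : ℓ(w s_j) > ℓ(w) for all j ∈ J}. If w ∈ W^J and s_i is a simple reflection such that t := w⁻¹ s_i w ∈ W_J, then ℓ(s_i w) = ℓ(w) + ℓ(t); in particular ℓ(s_i w) > ℓ(w). -/

import Mathlib

/-!
Tits' argument: letting `s i` act on `W × ZMod 2` by `(t, e) ↦ (s i * t * s i, e + [t = s i])`
respects the Coxeter relations, because the left inversion sequence of the braid word
`(i j) ^ M i j` is one list repeated twice. Reading off the parity, a right descent `s i` of `π ω`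
occurs, conjugated by `π ω`, in the left inversion sequence of `ω`: the exchange condition.

By exchange, an element `u` of minimal length in `u W_J` satisfies `ℓ (u * v) = ℓ u + ℓ v` for
`v ∈ W_J`: a letter of `J` shortening `u * v` would delete a letter of `u`, contradicting
minimality, or one of a reduced word of `v`. An element without right descents in `J` is minimal
in its coset, and `s i * w = w * (w⁻¹ * s i * w)`, where the reflection `w⁻¹ * s i * w` has odd
length.
-/

namespace CoxeterSystem

open List

variable {B : Type*} {W : Type*} [Group W] {M : CoxeterMatrix B} (cs : CoxeterSystem M W)

local prefix:100 "s" => cs.simple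
local prefix:100 "π" => cs.wordProd
local prefix:100 "ℓ" => cs.length
local notation "W_" J:max => Subgroup.closure (cs.simple '' J)

theorem prod_map_alternatingWord_two_mul {G : Type*} [Monoid G] (f : B → G) (i j : B) (p : ℕ) :
    ((alternatingWord i j (2 * p)).map f).prod = (f i * f j) ^ p := by
  induction p with
  | zero => simp [alternatingWord]
  | succ p ih =>
    rw [show 2 * (p + 1) = 2 * p + 1 + 1 by ring, alternatingWord_succ', alternatingWord_succ']
    simp [ih, pow_succ', mul_assoc]

theorem wordProd_alternatingWord_add_two_mul_M (i j : B) (n : ℕ) :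
    π alternatingWord i j (n + 2 * M i j) = π alternatingWord i j n := by
  have hpow : (s i * s j) ^ M i j = 1 := cs.simple_mul_simple_pow i j
  rw [prod_alternatingWord_eq_mul_pow, prod_alternatingWord_eq_mul_pow,
    Nat.add_mul_div_left _ _ two_pos, pow_add, hpow, mul_one]
  simp [Nat.even_add]

/-- The `k`-th entry is `s i * (s j * s i) ^ k`, which is periodic in `k` with period `M i j`. -/
theorem leftInvSeq_alternatingWord_two_mul_M (i j : B) :
    ∃ l : List W, cs.leftInvSeq (alternatingWord i j (2 * M i j)) = l ++ l := by
  set f : ℕ → W := fun k => π alternatingWord j i (2 * k + 1)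
  have hperiod : ∀ k, f (M i j + k) = f k := fun k => by
    simp only [f, show 2 * (M i j + k) + 1 = 2 * k + 1 + 2 * M j i by rw [M.symmetric]; ring,
      wordProd_alternatingWord_add_two_mul_M]
  have hlis : cs.leftInvSeq (alternatingWord i j (2 * M i j)) = (range (M i j + M i j)).map f :=
    ext_getElem (by simp; ring) fun k hk _ => by
      rw [getElem_leftInvSeq_alternatingWord _ _ _ _ _ (by simpa using hk)]
      simp [f]
  refine ⟨(range (M i j)).map f, ?_⟩
  rw [hlis, range_add, map_append, map_map]
  congr 1
  exact map_congr_left fun k _ => hperiod k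

section SignRepresentation

variable [DecidableEq W]

def signPerm (i : B) : Equiv.Perm (W × ZMod 2) :=
  Function.Involutive.toPerm
    (fun p => (MulAut.conj (s i) p.1, p.2 + if p.1 = s i then 1 else 0)) fun ⟨t, e⟩ => by
      have hfix : MulAut.conj (s i) (s i) = s i := by simp [inv_simple]
      simp only [(MulAut.conj (s i)).injective.eq_iff' hfix, add_assoc, CharTwo.add_self_eq_zero,
        add_zero, ← MulAut.mul_apply, ← map_mul, simple_mul_simple_self, map_one]
      rfl

theorem signPerm_apply (i : B) (t : W) (e : ZMod 2) :
    cs.signPerm i (t, e) = (MulAut.conj (s i) t, e + if t = s i then 1 else 0) := rfl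

theorem prod_map_signPerm_apply (ω : List B) (t : W) (e : ZMod 2) :
    (ω.map cs.signPerm).prod (t, e) =
      (MulAut.conj (π ω) t, e + (cs.leftInvSeq ω).count (MulAut.conj (π ω) t)) := by
  induction ω with
  | nil => simp
  | cons i ω ih =>
    have hfix : MulAut.conj (s i) (s i) = s i := by simp [inv_simple]
    rw [map_cons, prod_cons, Equiv.Perm.mul_apply, ih, signPerm_apply, leftInvSeq, count_cons,
      wordProd_cons, map_mul, MulAut.mul_apply,
      count_map_of_injective _ _ (MulAut.conj (s i)).injective]
    simp only [beq_iff_eq, @eq_comm _ (s i), (MulAut.conj (s i)).injective.eq_iff' hfix,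
      Nat.cast_add, Nat.cast_ite, Nat.cast_one, Nat.cast_zero, add_assoc]

theorem signPerm_isLiftable : M.IsLiftable cs.signPerm := fun i j => by
  have hπ : π alternatingWord i j (2 * M i j) = 1 := by
    rw [wordProd, prod_map_alternatingWord_two_mul, cs.simple_mul_simple_pow]
  obtain ⟨l, hl⟩ := cs.leftInvSeq_alternatingWord_two_mul_M i j
  ext ⟨t, e⟩ : 1
  rw [← prod_map_alternatingWord_two_mul, prod_map_signPerm_apply, hπ, hl, count_append]
  simp [CharTwo.add_self_eq_zero]

def signRep : W →* Equiv.Perm (W × ZMod 2) := cs.lift ⟨cs.signPerm, cs.signPerm_isLiftable⟩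

theorem signRep_wordProd_apply (ω : List B) (t : W) (e : ZMod 2) :
    cs.signRep (π ω) (t, e) =
      (MulAut.conj (π ω) t, e + (cs.leftInvSeq ω).count (MulAut.conj (π ω) t)) := by
  rw [← prod_map_signPerm_apply, wordProd, map_list_prod, map_map]
  congr 3
  funext i
  exact cs.lift_apply_simple cs.signPerm_isLiftable i

theorem signRep_simple (i : B) : cs.signRep (s i) = cs.signPerm i :=
  cs.lift_apply_simple cs.signPerm_isLiftable i

end SignRepresentation

theorem mem_leftInvSeq_of_isRightDescent {ω : List B} {i : B}
    (hi : cs.IsRightDescent (π ω) i) : MulAut.conj (π ω) (s i) ∈ cs.leftInvSeq ω := by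
  classical
  set t := MulAut.conj (π ω) (s i) with ht
  obtain ⟨χ, hχ, hπχ⟩ := cs.exists_isReduced (π ω * s i)
  have hχcount : (cs.leftInvSeq χ).count t = 0 := by
    refine count_eq_zero.mpr fun hmem => lt_asymm hi ?_
    have hinv := (cs.isLeftInversion_of_mem_leftInvSeq hχ hmem).2
    rwa [← hπχ, ht, MulAut.conj_apply, mul_assoc, inv_mul_cancel_left,
      simple_mul_simple_cancel_right] at hinv
  have hparity : ((cs.leftInvSeq χ).count t : ZMod 2) = 1 + (cs.leftInvSeq ω).count t := by
    have hfix : MulAut.conj (s i) (s i) = s i := by simp [inv_simple]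
    have h := cs.signRep_wordProd_apply χ (s i) 0
    rw [← hπχ, map_mul, Equiv.Perm.mul_apply, signRep_simple, signPerm_apply, if_pos rfl, hfix,
      signRep_wordProd_apply, map_mul, MulAut.mul_apply, hfix] at h
    simpa only [zero_add] using (congrArg Prod.snd h).symm
  rw [hχcount, Nat.cast_zero] at hparity
  refine count_pos_iff.mp (Nat.pos_of_ne_zero fun h0 => ?_)
  simp [h0] at hparity

theorem exists_eraseIdx_of_isRightDescent {ω : List B} {i : B}
    (hi : cs.IsRightDescent (π ω) i) : ∃ k < ω.length, π ω * s i = π (ω.eraseIdx k) := by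
  obtain ⟨k, hk, hkt⟩ := getElem_of_mem (cs.mem_leftInvSeq_of_isRightDescent hi)
  refine ⟨k, by simpa using hk, ?_⟩
  rw [← getD_leftInvSeq_mul_wordProd, getD_eq_getElem _ _ hk, hkt, MulAut.conj_apply,
    inv_mul_cancel_right]

theorem wordProd_mem_closure {J : Set B} {ω : List B} (hωJ : ∀ j ∈ ω, j ∈ J) :
    π ω ∈ W_ J :=
  list_prod_mem fun x hx => by
    obtain ⟨j, hj, rfl⟩ := mem_map.mp hx
    exact Subgroup.subset_closure ⟨j, hωJ j hj, rfl⟩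

theorem exists_isReduced_sublist_concat {ω : List B} (hω : cs.IsReduced ω) (i : B) :
    ∃ ω', ω'.Sublist (ω ++ [i]) ∧ cs.IsReduced ω' ∧ π ω' = π ω * s i := by
  rcases cs.length_mul_simple (π ω) i with hlen | hlen
  · refine ⟨ω ++ [i], Sublist.refl _, ?_, by rw [wordProd_append, wordProd_singleton]⟩
    rw [IsReduced, wordProd_append, wordProd_singleton, hlen, hω, length_append, length_singleton]
  · obtain ⟨k, hk, hπ⟩ := cs.exists_eraseIdx_of_isRightDescent (ω := ω) (i := i) (by
      rw [IsRightDescent]; omega)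
    refine ⟨ω.eraseIdx k, (eraseIdx_sublist ω k).trans (sublist_append_left ω [i]), ?_,
      hπ.symm⟩
    rw [IsReduced, ← hπ, length_eraseIdx_of_lt hk, ← hω]
    omega

variable {J : Set B}

theorem exists_isReduced_of_mem_closure {v : W} (hv : v ∈ W_ J) :
    ∃ ω, cs.IsReduced ω ∧ (∀ j ∈ ω, j ∈ J) ∧ π ω = v := by
  have mul_simple : ∀ x, ∀ j ∈ J, (∃ ω, cs.IsReduced ω ∧ (∀ j ∈ ω, j ∈ J) ∧ π ω = x) →
      ∃ ω, cs.IsReduced ω ∧ (∀ j ∈ ω, j ∈ J) ∧ π ω = x * s j := by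
    rintro x j hj ⟨ω, hω, hωJ, rfl⟩
    obtain ⟨ω', hsub, hω', hπ⟩ := cs.exists_isReduced_sublist_concat hω j
    refine ⟨ω', hω', fun k hk => ?_, hπ⟩
    rcases mem_append.mp (hsub.subset hk) with hk | hk
    exacts [hωJ k hk, (mem_singleton.mp hk) ▸ hj]
  induction hv using Subgroup.closure_induction_right with
  | one => exact ⟨[], by simp [IsReduced], by simp, rfl⟩
  | mul_right x _ y hy ih =>
    obtain ⟨j, hj, rfl⟩ := hy
    exact mul_simple x j hj ih
  | mul_inv_cancel x _ y hy ih =>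
    obtain ⟨j, hj, rfl⟩ := hy
    simpa only [inv_simple] using mul_simple x j hj ih

theorem exists_isRightDescent_of_mem_closure {x : W}
    (hx : x ∈ W_ J) (hx1 : x ≠ 1) :
    ∃ j ∈ J, cs.IsRightDescent x j := by
  obtain ⟨ω, hω, hωJ, rfl⟩ := cs.exists_isReduced_of_mem_closure hx
  obtain rfl | ⟨α, j, rfl⟩ := ω.eq_nil_or_concat
  · exact absurd rfl hx1
  · refine ⟨j, hωJ j (by simp), ?_⟩
    have hα := cs.length_wordProd_le α
    rw [IsRightDescent, hω, concat_eq_append, wordProd_append, wordProd_singleton,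
      simple_mul_simple_cancel_right, length_append, length_singleton]
    omega

theorem not_isRightDescent_mul_wordProd {u : W}
    (hmin : ∀ y ∈ W_ J, ℓ u ≤ ℓ (u * y)) {α : List B} {j : B}
    (hα : π α ∈ W_ J) (hj : j ∈ J) (hαj : cs.IsReduced (α ++ [j]))
    (hlen : ℓ (u * π α) = ℓ u + α.length) : ¬ cs.IsRightDescent (u * π α) j := by
  intro hdesc
  obtain ⟨υ, hυ, rfl⟩ := cs.exists_isReduced u
  rw [← wordProd_append] at hdesc
  obtain ⟨k, hk, hπ⟩ := cs.exists_eraseIdx_of_isRightDescent hdesc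
  rw [length_append] at hk
  rcases lt_or_ge k υ.length with hkυ | hkυ
  · rw [eraseIdx_append_of_lt_length hkυ, wordProd_append, wordProd_append] at hπ
    have hconj : π α * s j * (π α)⁻¹ ∈ W_ J :=
      mul_mem (mul_mem hα (Subgroup.subset_closure ⟨j, hj, rfl⟩)) (inv_mem hα)
    have h1 := hmin _ hconj
    rw [← mul_assoc, ← mul_assoc, hπ, mul_inv_cancel_right] at h1
    have h2 := cs.length_wordProd_le (υ.eraseIdx k)
    rw [length_eraseIdx_of_lt hkυ] at h2
    rw [hυ] at h1
    omega
  · rw [eraseIdx_append_of_length_le hkυ, wordProd_append, wordProd_append, mul_assoc] at hπ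
    have h1 := cs.length_wordProd_le (α.eraseIdx (k - υ.length))
    rw [← mul_left_cancel hπ, length_eraseIdx_of_lt (by omega), ← wordProd_singleton,
      ← wordProd_append, hαj, length_append, length_singleton] at h1
    omega

theorem length_mul_wordProd_of_forall_length_le {u : W}
    (hmin : ∀ y ∈ W_ J, ℓ u ≤ ℓ (u * y)) {ω : List B} (hω : cs.IsReduced ω)
    (hωJ : ∀ j ∈ ω, j ∈ J) : ℓ (u * π ω) = ℓ u + ω.length := by
  induction ω using List.reverseRecOn with
  | nil => simp
  | append_singleton α j ih =>
    have hα : cs.IsReduced α := by simpa using hω.take α.length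
    have hαJ : ∀ i ∈ α, i ∈ J := fun i hi => hωJ i (mem_append_left _ hi)
    have hlen := ih hα hαJ
    have hαmem : π α ∈ W_ J := cs.wordProd_mem_closure hαJ
    rw [wordProd_append, wordProd_singleton, ← mul_assoc]
    rcases cs.length_mul_simple (u * π α) j with hlen' | hlen'
    · rw [hlen', hlen, length_append, length_singleton, add_assoc]
    · exact absurd (show cs.IsRightDescent _ _ by rw [IsRightDescent]; omega)
        (cs.not_isRightDescent_mul_wordProd hmin hαmem (hωJ j (by simp)) hω hlen)

theorem length_mul_of_forall_length_le {u : W}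
    (hmin : ∀ y ∈ W_ J, ℓ u ≤ ℓ (u * y)) {v : W} (hv : v ∈ W_ J) :
    ℓ (u * v) = ℓ u + ℓ v := by
  obtain ⟨ω, hω, hωJ, rfl⟩ := cs.exists_isReduced_of_mem_closure hv
  rw [cs.length_mul_wordProd_of_forall_length_le hmin hω hωJ, hω]

/-- If `u * x` has minimal length in `u W_J` and `x ≠ 1`, a right descent `s j` of `x⁻¹` in
`W_J` would be a right descent of `u`. -/
theorem length_mul_of_forall_lt_length_mul_simple {u : W} (hu : ∀ j ∈ J, ℓ u < ℓ (u * s j))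
    {v : W} (hv : v ∈ W_ J) : ℓ (u * v) = ℓ u + ℓ v := by
  obtain ⟨x, hx, hxmin⟩ := (InvImage.wf (fun y => ℓ (u * y)) wellFounded_lt).has_min
    (W_ J : Set W) ⟨1, one_mem _⟩
  have hmin : ∀ y ∈ W_ J, ℓ (u * x) ≤ ℓ (u * x * y) :=
    fun y hy => not_lt.mp (by rw [mul_assoc]; exact hxmin _ (mul_mem hx hy))
  obtain rfl : x = 1 := by
    by_contra hx1
    obtain ⟨j, hj, hdesc⟩ :=
      cs.exists_isRightDescent_of_mem_closure (inv_mem hx) (inv_ne_one.mpr hx1)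
    have h1 := cs.length_mul_of_forall_length_le hmin (inv_mem hx)
    have h2 := cs.length_mul_of_forall_length_le hmin
      (mul_mem (inv_mem hx) (Subgroup.subset_closure ⟨j, hj, rfl⟩))
    rw [mul_inv_cancel_right] at h1
    rw [← mul_assoc, mul_inv_cancel_right] at h2
    have h3 := hu j hj
    rw [IsRightDescent] at hdesc
    omega
  simpa using cs.length_mul_of_forall_length_le (by simpa using hmin) hv

end CoxeterSystem

/-- Let `(W,S)` be a Coxeter system, `J` a subset of the index set of the
simple reflections, `W_J` the subgroup generated by the simple reflections indexed by `J`,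
and `W^J = {w : ℓ(w s_j) > ℓ(w) for all j ∈ J}`.  If `w ∈ W^J` and `s_i` is a simple
reflection such that `t := w⁻¹ s_i w ∈ W_J`, then `ℓ(s_i w) = ℓ(w) + ℓ(t)`;
in particular `ℓ(s_i w) > ℓ(w)`. -/
theorem length_simple_mul_of_conj_mem
    {B : Type*} {W : Type*} [Group W] {M : CoxeterMatrix B}
    (cs : CoxeterSystem M W) (J : Set B) (w : W)
    (hw : ∀ j ∈ J, cs.length (w * cs.simple j) > cs.length w)
    (i : B)
    (ht : w⁻¹ * cs.simple i * w ∈ Subgroup.closure (cs.simple '' J)) :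
    cs.length (cs.simple i * w) = cs.length w + cs.length (w⁻¹ * cs.simple i * w) ∧
      cs.length (cs.simple i * w) > cs.length w := by
  have hlen : cs.length (cs.simple i * w) = cs.length w + cs.length (w⁻¹ * cs.simple i * w) := by
    rw [← cs.length_mul_of_forall_lt_length_mul_simple hw ht]
    group
  have hpos : 0 < cs.length (w⁻¹ * cs.simple i * w) := by
    simpa using ((cs.isReflection_simple i).conj w⁻¹).odd_length.pos
  exact ⟨hlen, by omega⟩
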